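/- Let c ⊂ P^2 be a smooth conic over an algebraically closed field of characteristic zero and let p, q be two distinct points of P^2 not lying on c. Then there exist a tangent line l to c and a (possibly degenerate) conic in the pencil generated by c and the double line 2l which passes through both p and q. -/

import Mathlib

/-- The quadratic form of the smooth conic `c = {yz = x²}` in ℙ². -/
def conicForm {K : Type*} [Field K] (v : Fin 3 → K) : K := v 1 * v 2 - v 0 ^ 2

/-- The tangent line to the conic `yz = x²` at a point `r` of the conic,
evaluated at `v` (the polar line of `r`): `-2x₀·x + z₀·y + y₀·z`. -/
def tangentLine {K : Type*} [Field K] (r v : Fin 3 → K) : K :=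
  -2 * r 0 * v 0 + r 2 * v 1 + r 1 * v 2

/-- Given the smooth conic `c = {yz = x²}` in ℙ² over an algebraically closed
field of characteristic zero and two distinct points `p, q` not on `c`, some
member `λ·c + μ·(2l)` of a pencil generated by `c` and the double of a tangent
line `l` to `c` passes through both `p` and `q`. -/
theorem stmt16 {K : Type*} [Field K] [IsAlgClosed K] [CharZero K]
    (p q : Fin 3 → K) (hp : p ≠ 0) (hq : q ≠ 0)
    (hpq : ∀ t : K, q ≠ t • p)
    (hpc : conicForm p ≠ 0) (hqc : conicForm q ≠ 0) :
    ∃ r : Fin 3 → K, r ≠ 0 ∧ conicForm r = 0 ∧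
      ∃ lam mu : K, (lam, mu) ≠ (0, 0) ∧
        lam * conicForm p + mu * (tangentLine r p) ^ 2 = 0 ∧
        lam * conicForm q + mu * (tangentLine r q) ^ 2 = 0 := by
  obtain ⟨s, hs⟩ := IsAlgClosed.exists_pow_nat_eq (conicForm q / conicForm p) (n := 2) (by norm_num)
  have hs' : s ^ 2 * conicForm p = conicForm q := by rw [hs]; field_simp
  set w : Fin 3 → K := q - s • p with hw
  have hwlin : ∀ v : Fin 3 → K, tangentLine v w = tangentLine v q - s * tangentLine v p := by
    intro v
    simp only [tangentLine, hw, Pi.sub_apply, Pi.smul_apply, smul_eq_mul]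
    ring
  suffices h : ∃ r : Fin 3 → K, r ≠ 0 ∧ conicForm r = 0 ∧ tangentLine r w = 0 by
    obtain ⟨r, hr0, hrc, hrt⟩ := h
    have htq : tangentLine r q = s * tangentLine r p := by
      have := hwlin r
      rw [hrt] at this
      linear_combination -this
    refine ⟨r, hr0, hrc, (tangentLine r p) ^ 2, -(conicForm p), ?_, by ring, ?_⟩
    · simp only [ne_eq, Prod.mk.injEq, not_and]
      intro _ h2
      exact hpc (neg_eq_zero.mp h2)
    · rw [htq]
      linear_combination (-(tangentLine r p) ^ 2) * hs'
  by_cases hw2 : w 2 = 0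
  · refine ⟨![0, 1, 0], ?_, ?_, ?_⟩
    · intro h
      have := congrFun h 1
      simp at this
    · simp [conicForm]
    · simp [tangentLine, hw2]
  · obtain ⟨u, hu⟩ := IsAlgClosed.exists_pow_nat_eq ((w 0) ^ 2 - w 2 * w 1) (n := 2) (by norm_num)
    refine ⟨![(w 0 + u) / w 2, ((w 0 + u) / w 2) ^ 2, 1], ?_, ?_, ?_⟩
    · intro h
      have := congrFun h 2
      simp at this
    · simp [conicForm]
    · simp only [tangentLine, Matrix.cons_val_zero, Matrix.cons_val_one, Matrix.head_cons,
        Matrix.cons_val_two, Matrix.tail_cons]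
      field_simp
      linear_combination hu
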